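/- Let A, B : [0,1] → ℝ be continuous and let a, b be real numbers with b ≠ 0 and a/b > 0 such that h(t) := (a·A(t) + b·B(t))/b satisfies h(t) ≥ 0 for all t ∈ [0,1] and h is not identically zero. Then for the Abel equation x' = A(t)x³ + B(t)x²: (i) if ∫₀¹ A(t) dt < 0, every periodic orbit γ with γ(0) ≠ 0 satisfies γ(t) > a/b for all t ∈ [0,1]; (ii) if ∫₀¹ A(t) dt > 0 and ∫₀¹ B(t) dt > 0, every periodic orbit γ with γ(0) ≠ 0 satisfies γ(t) < 0 for all t ∈ [0,1]; (iii) if ∫₀¹ A(t) dt > 0 and ∫₀¹ B(t) dt < 0, there exists a periodic orbit γ with 0 < γ(t) < a/b for all t ∈ [0,1]. -/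

import Mathlib

/-!
Write `r = a / b` and `h = r A + B ≥ 0`. Along a solution `γ' = (A γ² + B γ) γ`, so `γ` keeps its
sign, and `(γ - r)' ≥ A γ² (γ - r)`, so a periodic orbit lies entirely below or entirely above the
level `r` (it cannot be `≡ r`, since `h ≢ 0`). If a periodic orbit avoids `0` and `r`, then
`∫ (A γ + B) / (γ - r) = 0`, the integrand being `γ' / (γ² (γ - r))`, an exact derivative.
Comparing `(A γ + B) / (γ - r) = A + h / (γ - r)` with `A`, and
`r (A γ + B) / (γ - r) = h γ / (γ - r) - B` with `-B`, excludes the forbidden positions in (i)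
and (ii).

For (iii), the equation truncated to `x ∈ [0, r]` has, by Picard–Lindelöf, a flow from time `1`
backwards which keeps `[0, r]` invariant (because `h ≥ 0`) and is Lipschitz in the initial value.
The return map `d ↦ γ_d(0)` satisfies `γ_r(0) ≤ r`, and `γ_d(0) ≥ d` for small `d > 0` by
`∫ (A γ + B) = 1/γ(0) - 1/γ(1)` and `∫ B < 0`; a fixed point is the required orbit.
-/

/-- `γ : ℝ → ℝ` is a solution of the Abel equation `x' = A(t)x³ + B(t)x²` on `[0,1]`. -/
def IsAbelSolution (A B : ℝ → ℝ) (γ : ℝ → ℝ) : Prop :=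
  ∀ t ∈ Set.Icc (0:ℝ) 1,
    HasDerivWithinAt γ (A t * γ t ^ 3 + B t * γ t ^ 2) (Set.Icc (0:ℝ) 1) t

/-- A periodic orbit of the Abel equation: a solution on `[0,1]` with `γ 0 = γ 1`. -/
def IsPeriodicOrbit (A B : ℝ → ℝ) (γ : ℝ → ℝ) : Prop :=
  IsAbelSolution A B γ ∧ γ 0 = γ 1

open Set Real intervalIntegral
open scoped NNReal

theorem ContinuousOn.exists_forall_mem_Icc_hasDerivAt {f : ℝ → ℝ} {a b : ℝ} (hab : a ≤ b)
    (hf : ContinuousOn f (Icc a b)) : ∃ F : ℝ → ℝ, ∀ t ∈ Icc a b, HasDerivAt F (f t) t := by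
  have hcont : Continuous fun x => f (projIcc a b hab x) :=
    hf.comp_continuous (continuous_subtype_val.comp continuous_projIcc) fun x =>
      (projIcc a b hab x).2
  refine ⟨fun t => ∫ x in a..t, f (projIcc a b hab x), fun t ht => ?_⟩
  simpa [projIcc_of_mem hab ht] using (hcont.integral_hasStrictDerivAt a t).hasDerivAt

section ExpWeight

variable {g c : ℝ → ℝ} {s : Set ℝ}

theorem hasDerivWithinAt_mul_exp_neg {g' w x : ℝ} (hg : HasDerivWithinAt g g' s x)
    (hc : HasDerivWithinAt c w s x) :
    HasDerivWithinAt (fun t => g t * exp (-c t)) ((g' - w * g x) * exp (-c x)) s x :=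
  (hg.mul hc.fun_neg.exp).congr_deriv (by ring)

theorem monotoneOn_mul_exp_neg {g' w : ℝ → ℝ} (hs : Convex ℝ s)
    (hg : ∀ t ∈ s, HasDerivWithinAt g (g' t) s t) (hc : ∀ t ∈ s, HasDerivWithinAt c (w t) s t)
    (hle : ∀ t ∈ s, w t * g t ≤ g' t) : MonotoneOn (fun t => g t * exp (-c t)) s := by
  have hderiv t (ht : t ∈ s) := hasDerivWithinAt_mul_exp_neg (hg t ht) (hc t ht)
  refine monotoneOn_of_hasDerivWithinAt_nonneg hs (fun t ht => (hderiv t ht).continuousWithinAt)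
    (fun t ht => (hderiv t (interior_subset ht)).mono interior_subset) fun t ht => ?_
  exact mul_nonneg (sub_nonneg.2 (hle t (interior_subset ht))) (exp_pos _).le

theorem eq_mul_exp_sub_of_hasDerivWithinAt {w : ℝ → ℝ} (hs : Convex ℝ s)
    (hg : ∀ t ∈ s, HasDerivWithinAt g (w t * g t) s t)
    (hc : ∀ t ∈ s, HasDerivWithinAt c (w t) s t) {x y : ℝ} (hx : x ∈ s) (hy : y ∈ s) :
    g y = g x * exp (c y - c x) := by
  have hconst := hs.norm_image_sub_le_of_norm_hasDerivWithin_le (C := 0)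
    (fun t ht => hasDerivWithinAt_mul_exp_neg (hg t ht) (hc t ht)) (fun t _ => by simp) hx hy
  have hxy : g y * exp (-c y) = g x * exp (-c x) := by simpa [sub_eq_zero] using hconst
  calc g y = g y * exp (-c y) * exp (c y) := by
        rw [mul_assoc, ← exp_add, neg_add_cancel, exp_zero, mul_one]
    _ = g x * exp (c y - c x) := by rw [hxy, mul_assoc, ← exp_add]; ring_nf

end ExpWeight

namespace IsAbelSolution

variable {A B γ : ℝ → ℝ}

theorem continuousOn (hγ : IsAbelSolution A B γ) : ContinuousOn γ (Icc 0 1) :=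
  fun t ht => (hγ t ht).continuousWithinAt

theorem exists_eq_mul_exp (hA : ContinuousOn A (Icc 0 1)) (hB : ContinuousOn B (Icc 0 1))
    (hγ : IsAbelSolution A B γ) :
    ∃ c : ℝ → ℝ, ∀ s ∈ Icc (0:ℝ) 1, ∀ t ∈ Icc (0:ℝ) 1, γ t = γ s * exp (c t - c s) := by
  have hq : ContinuousOn (fun t => A t * γ t ^ 2 + B t * γ t) (Icc 0 1) :=
    (hA.mul (hγ.continuousOn.pow 2)).add (hB.mul hγ.continuousOn)
  obtain ⟨c, hc⟩ := hq.exists_forall_mem_Icc_hasDerivAt zero_le_one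
  exact ⟨c, fun s hs t ht => eq_mul_exp_sub_of_hasDerivWithinAt (convex_Icc 0 1)
    (fun u hu => (hγ u hu).congr_deriv (by ring)) (fun u hu => (hc u hu).hasDerivWithinAt) hs ht⟩

variable {s t : ℝ}

theorem pos_of_pos (hA : ContinuousOn A (Icc 0 1)) (hB : ContinuousOn B (Icc 0 1))
    (hγ : IsAbelSolution A B γ) (hs : s ∈ Icc (0:ℝ) 1) (ht : t ∈ Icc (0:ℝ) 1)
    (h : 0 < γ s) : 0 < γ t := by
  obtain ⟨c, hc⟩ := hγ.exists_eq_mul_exp hA hB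
  rw [hc s hs t ht]
  positivity

theorem neg_of_neg (hA : ContinuousOn A (Icc 0 1)) (hB : ContinuousOn B (Icc 0 1))
    (hγ : IsAbelSolution A B γ) (hs : s ∈ Icc (0:ℝ) 1) (ht : t ∈ Icc (0:ℝ) 1)
    (h : γ s < 0) : γ t < 0 := by
  obtain ⟨c, hc⟩ := hγ.exists_eq_mul_exp hA hB
  rw [hc s hs t ht]
  exact mul_neg_of_neg_of_pos h (exp_pos _)

theorem eq_zero_of_eq_zero (hA : ContinuousOn A (Icc 0 1)) (hB : ContinuousOn B (Icc 0 1))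
    (hγ : IsAbelSolution A B γ) (hs : s ∈ Icc (0:ℝ) 1) (ht : t ∈ Icc (0:ℝ) 1)
    (h : γ s = 0) : γ t = 0 := by
  obtain ⟨c, hc⟩ := hγ.exists_eq_mul_exp hA hB
  rw [hc s hs t ht, h, zero_mul]

theorem eq_zero_of_eq_const (hγ : IsAbelSolution A B γ) {x : ℝ}
    (hx : ∀ t ∈ Icc (0:ℝ) 1, γ t = x) : ∀ t ∈ Icc (0:ℝ) 1, A t * x ^ 3 + B t * x ^ 2 = 0 := by
  intro t ht
  have hconst : HasDerivWithinAt γ 0 (Icc 0 1) t :=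
    (hasDerivWithinAt_const t _ x).congr hx (hx t ht)
  rw [← hx t ht]
  exact (uniqueDiffOn_Icc_zero_one t ht).eq_deriv _ (hγ t ht) hconst

theorem integral_eq_sub_of_hasDerivAt (hγ : IsAbelSolution A B γ) {G G' f : ℝ → ℝ}
    (hG : ∀ t ∈ Icc (0:ℝ) 1, HasDerivAt G (G' (γ t)) (γ t))
    (hf : ∀ t ∈ Icc (0:ℝ) 1, G' (γ t) * (A t * γ t ^ 3 + B t * γ t ^ 2) = f t)
    (hfc : ContinuousOn f (Icc 0 1)) : ∫ t in (0:ℝ)..1, f t = G (γ 1) - G (γ 0) := by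
  have hderiv : ∀ t ∈ Icc (0:ℝ) 1, HasDerivWithinAt (G ∘ γ) (f t) (Icc 0 1) t := fun t ht =>
    hf t ht ▸ (hG t ht).comp_hasDerivWithinAt t (hγ t ht)
  exact integral_eq_sub_of_hasDerivAt_of_le zero_le_one
    (fun t ht => (hderiv t ht).continuousWithinAt)
    (fun t ht => (hderiv t (Ioo_subset_Icc_self ht)).hasDerivAt (Icc_mem_nhds ht.1 ht.2))
    (hfc.intervalIntegrable_of_Icc zero_le_one)

theorem integral_eq_inv_sub_inv (hA : ContinuousOn A (Icc 0 1)) (hB : ContinuousOn B (Icc 0 1))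
    (hγ : IsAbelSolution A B γ) (hne : ∀ t ∈ Icc (0:ℝ) 1, γ t ≠ 0) :
    ∫ t in (0:ℝ)..1, (A t * γ t + B t) = (γ 0)⁻¹ - (γ 1)⁻¹ := by
  have hfc : ContinuousOn (fun t => A t * γ t + B t) (Icc 0 1) := (hA.mul hγ.continuousOn).add hB
  rw [hγ.integral_eq_sub_of_hasDerivAt (G := fun x => -x⁻¹) (G' := fun x => (x ^ 2)⁻¹)
    (fun t ht => by simpa using (hasDerivAt_inv (hne t ht)).fun_neg)
    (fun t ht => by field_simp [hne t ht]) hfc]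
  ring

end IsAbelSolution

namespace IsPeriodicOrbit

variable {A B γ : ℝ → ℝ} {r : ℝ}

theorem integral_div_sub_eq_zero (hA : ContinuousOn A (Icc 0 1))
    (hB : ContinuousOn B (Icc 0 1)) (hγ : IsPeriodicOrbit A B γ) (hr : r ≠ 0)
    (h0 : ∀ t ∈ Icc (0:ℝ) 1, γ t ≠ 0) (hr' : ∀ t ∈ Icc (0:ℝ) 1, γ t ≠ r) :
    ∫ t in (0:ℝ)..1, (A t * γ t + B t) / (γ t - r) = 0 := by
  have hG : ∀ x, x ≠ 0 → x ≠ r → HasDerivAt (fun y => (log (y - r) - log y) / r ^ 2 + (r * y)⁻¹)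
      ((x ^ 2 * (x - r))⁻¹) x := by
    intro x hx hxr
    have hxr' : x - r ≠ 0 := sub_ne_zero.2 hxr
    have := ((((hasDerivAt_id' x).sub_const r).log hxr').sub ((hasDerivAt_id' x).log hx)).div_const
      (r ^ 2) |>.add (((hasDerivAt_id' x).const_mul r).inv (mul_ne_zero hr hx))
    refine this.congr_deriv ?_
    field_simp
    ring
  have hf : ∀ t ∈ Icc (0:ℝ) 1, (γ t ^ 2 * (γ t - r))⁻¹ * (A t * γ t ^ 3 + B t * γ t ^ 2)
      = (A t * γ t + B t) / (γ t - r) := fun t ht => by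
    have := sub_ne_zero.2 (hr' t ht)
    field_simp [h0 t ht]
  have hfc : ContinuousOn (fun t => (A t * γ t + B t) / (γ t - r)) (Icc 0 1) :=
    ((hA.mul hγ.1.continuousOn).add hB).div (hγ.1.continuousOn.sub continuousOn_const)
      fun t ht => sub_ne_zero.2 (hr' t ht)
  rw [hγ.1.integral_eq_sub_of_hasDerivAt (G' := fun x => (x ^ 2 * (x - r))⁻¹)
    (fun t ht => hG _ (h0 t ht) (hr' t ht)) hf hfc, hγ.2, sub_self]

theorem lt_or_gt (hA : ContinuousOn A (Icc 0 1)) (hγ : IsPeriodicOrbit A B γ) (hr : r ≠ 0)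
    (hh : ∀ t ∈ Icc (0:ℝ) 1, 0 ≤ r * A t + B t) (hh_ne : ∃ t ∈ Icc (0:ℝ) 1, r * A t + B t ≠ 0) :
    (∀ t ∈ Icc (0:ℝ) 1, γ t < r) ∨ ∀ t ∈ Icc (0:ℝ) 1, r < γ t := by
  have hw : ContinuousOn (fun t => A t * γ t ^ 2) (Icc 0 1) := hA.mul (hγ.1.continuousOn.pow 2)
  obtain ⟨c, hc⟩ := hw.exists_forall_mem_Icc_hasDerivAt zero_le_one
  -- `(γ - r)' = A γ² (γ - r) + γ² (r A + B) ≥ A γ² (γ - r)`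
  have hmono : MonotoneOn (fun t => (γ t - r) * exp (-c t)) (Icc 0 1) :=
    monotoneOn_mul_exp_neg (convex_Icc 0 1) (fun t ht => (hγ.1 t ht).sub_const r)
      (fun t ht => (hc t ht).hasDerivWithinAt)
      fun t ht => by nlinarith [mul_nonneg (sq_nonneg (γ t)) (hh t ht)]
  have h0 : (0:ℝ) ∈ Icc (0:ℝ) 1 := left_mem_Icc.2 zero_le_one
  have h1 : (1:ℝ) ∈ Icc (0:ℝ) 1 := right_mem_Icc.2 zero_le_one
  rcases lt_trichotomy (γ 0) r with hlt | heq | hgt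
  · refine Or.inl fun t ht => sub_neg.1 (neg_of_mul_neg_left ?_ (exp_pos (-c t)).le)
    refine (hmono ht h1 ht.2).trans_lt (mul_neg_of_neg_of_pos ?_ (exp_pos _))
    linarith [hγ.2]
  · obtain ⟨t, ht, hne⟩ := hh_ne
    have hconst : ∀ t ∈ Icc (0:ℝ) 1, γ t = r := fun t ht => by
      have hle := hmono h0 ht ht.1
      have hge := hmono ht h1 ht.2
      simp only [heq, ← hγ.2, sub_self, zero_mul] at hle hge
      have := le_antisymm hge hle
      simpa [sub_eq_zero, (exp_pos _).ne'] using this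
    have hzero : r ^ 2 * (r * A t + B t) = 0 := by
      linear_combination hγ.1.eq_zero_of_eq_const hconst t ht
    exact (hne ((mul_eq_zero.1 hzero).resolve_left (pow_ne_zero 2 hr))).elim
  · refine Or.inr fun t ht => sub_pos.1 (pos_of_mul_pos_left ?_ (exp_pos (-c t)).le)
    exact (mul_pos (sub_pos.2 hgt) (exp_pos _)).trans_le (hmono h0 ht ht.1)

theorem gt_of_integral_neg (hA : ContinuousOn A (Icc 0 1)) (hB : ContinuousOn B (Icc 0 1))
    (hr : 0 < r) (hh : ∀ t ∈ Icc (0:ℝ) 1, 0 ≤ r * A t + B t)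
    (hh_ne : ∃ t ∈ Icc (0:ℝ) 1, r * A t + B t ≠ 0) (hγ : IsPeriodicOrbit A B γ) (hγ0 : γ 0 ≠ 0)
    (hA_int : ∫ t in (0:ℝ)..1, A t < 0) : ∀ t ∈ Icc (0:ℝ) 1, r < γ t := by
  refine (hγ.lt_or_gt hA hr.ne' hh hh_ne).resolve_left fun hlt => ?_
  have hne : ∀ t ∈ Icc (0:ℝ) 1, γ t ≠ 0 := fun t ht h =>
    hγ0 (hγ.1.eq_zero_of_eq_zero hA hB ht (left_mem_Icc.2 zero_le_one) h)
  have hfc : ContinuousOn (fun t => (A t * γ t + B t) / (γ t - r)) (Icc 0 1) :=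
    ((hA.mul hγ.1.continuousOn).add hB).div (hγ.1.continuousOn.sub continuousOn_const)
      fun t ht => (sub_neg.2 (hlt t ht)).ne
  -- `(A γ + B) / (γ - r) = A + (r A + B) / (γ - r) ≤ A`
  have hle : ∫ t in (0:ℝ)..1, (A t * γ t + B t) / (γ t - r) ≤ ∫ t in (0:ℝ)..1, A t :=
    integral_mono_on zero_le_one (hfc.intervalIntegrable_of_Icc zero_le_one)
    (hA.intervalIntegrable_of_Icc zero_le_one) fun t ht => by
      rw [div_le_iff_of_neg (sub_neg.2 (hlt t ht))]
      nlinarith [hh t ht]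
  linarith [hγ.integral_div_sub_eq_zero hA hB hr.ne' hne fun t ht => (hlt t ht).ne]

theorem neg_of_integral_pos (hA : ContinuousOn A (Icc 0 1)) (hB : ContinuousOn B (Icc 0 1))
    (hr : 0 < r) (hh : ∀ t ∈ Icc (0:ℝ) 1, 0 ≤ r * A t + B t)
    (hh_ne : ∃ t ∈ Icc (0:ℝ) 1, r * A t + B t ≠ 0) (hγ : IsPeriodicOrbit A B γ) (hγ0 : γ 0 ≠ 0)
    (hA_int : 0 < ∫ t in (0:ℝ)..1, A t) (hB_int : 0 < ∫ t in (0:ℝ)..1, B t) :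
    ∀ t ∈ Icc (0:ℝ) 1, γ t < 0 := by
  have h0 : (0:ℝ) ∈ Icc (0:ℝ) 1 := left_mem_Icc.2 zero_le_one
  refine hγ0.lt_or_gt.elim (fun hneg t ht => hγ.1.neg_of_neg hA hB h0 ht hneg) fun hpos => ?_
  have hγpos : ∀ t ∈ Icc (0:ℝ) 1, 0 < γ t := fun t ht => hγ.1.pos_of_pos hA hB h0 ht hpos
  have hfc (hr' : ∀ t ∈ Icc (0:ℝ) 1, γ t ≠ r) :
      ContinuousOn (fun t => (A t * γ t + B t) / (γ t - r)) (Icc 0 1) :=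
    ((hA.mul hγ.1.continuousOn).add hB).div (hγ.1.continuousOn.sub continuousOn_const)
      fun t ht => sub_ne_zero.2 (hr' t ht)
  have hkey (hr' : ∀ t ∈ Icc (0:ℝ) 1, γ t ≠ r) :=
    hγ.integral_div_sub_eq_zero hA hB hr.ne' (fun t ht => (hγpos t ht).ne') hr'
  rcases hγ.lt_or_gt hA hr.ne' hh hh_ne with hlt | hgt
  · have hr' : ∀ t ∈ Icc (0:ℝ) 1, γ t ≠ r := fun t ht => (hlt t ht).ne
    -- `r (A γ + B) / (γ - r) = (r A + B) γ / (γ - r) - B ≤ -B`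
    have hle : ∫ t in (0:ℝ)..1, (A t * γ t + B t) / (γ t - r)
        ≤ ∫ t in (0:ℝ)..1, -(B t / r) :=
      integral_mono_on zero_le_one ((hfc hr').intervalIntegrable_of_Icc zero_le_one)
        ((hB.div_const r).neg.intervalIntegrable_of_Icc zero_le_one) fun t ht => by
          rw [div_le_iff_of_neg (sub_neg.2 (hlt t ht)), neg_mul, div_mul_eq_mul_div, ← neg_div,
            div_le_iff₀ hr]
          nlinarith [mul_nonneg (hγpos t ht).le (hh t ht)]
    rw [intervalIntegral.integral_neg, intervalIntegral.integral_div, hkey hr'] at hle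
    have : 0 < (∫ t in (0:ℝ)..1, B t) / r := div_pos hB_int hr
    linarith
  · have hr' : ∀ t ∈ Icc (0:ℝ) 1, γ t ≠ r := fun t ht => (hgt t ht).ne'
    -- `(A γ + B) / (γ - r) = A + (r A + B) / (γ - r) ≥ A`
    have hle : ∫ t in (0:ℝ)..1, A t ≤ ∫ t in (0:ℝ)..1, (A t * γ t + B t) / (γ t - r) :=
      integral_mono_on zero_le_one (hA.intervalIntegrable_of_Icc zero_le_one)
      ((hfc hr').intervalIntegrable_of_Icc zero_le_one) fun t ht => by
        rw [le_div_iff₀ (sub_pos.2 (hgt t ht))]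
        nlinarith [hh t ht]
    linarith [hkey hr']

end IsPeriodicOrbit

theorem nonpos_of_hasDerivWithinAt_nonneg_of_pos {g g' : ℝ → ℝ} {a b : ℝ}
    (hg : ∀ t ∈ Icc a b, HasDerivWithinAt g (g' t) (Icc a b) t)
    (hg' : ∀ t ∈ Icc a b, 0 < g t → 0 ≤ g' t) (hb : g b ≤ 0) : ∀ t ∈ Icc a b, g t ≤ 0 := by
  by_contra! ⟨t₀, ht₀, hpos⟩
  have hcont : ContinuousOn g (Icc a b) := fun t ht => (hg t ht).continuousWithinAt
  -- `sInf S` is the first point after `t₀` where `g ≤ 0`; before it `g > 0`, so `g` increases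
  set S := Icc t₀ b ∩ g ⁻¹' Iic 0
  have hbS : b ∈ S := ⟨⟨ht₀.2, le_rfl⟩, hb⟩
  have hbdd : BddBelow S := ⟨t₀, fun s hs => hs.1.1⟩
  have ht₁ : sInf S ∈ S := ((hcont.mono (Icc_subset_Icc_left ht₀.1)).preimage_isClosed_of_isClosed
    isClosed_Icc isClosed_Iic).csInf_mem ⟨b, hbS⟩ hbdd
  have hsub : Icc t₀ (sInf S) ⊆ Icc a b := Icc_subset_Icc ht₀.1 ht₁.1.2
  have hgpos : ∀ s ∈ Ico t₀ (sInf S), 0 < g s := fun s hs => lt_of_not_ge fun h =>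
    hs.2.not_ge (csInf_le hbdd ⟨⟨hs.1, hs.2.le.trans ht₁.1.2⟩, h⟩)
  have hmono : MonotoneOn g (Icc t₀ (sInf S)) := by
    refine monotoneOn_of_hasDerivWithinAt_nonneg (convex_Icc _ _) (hcont.mono hsub)
      (fun t ht => (hg t (hsub (interior_subset ht))).mono (interior_subset.trans hsub))
      fun t ht => ?_
    rw [interior_Icc] at ht
    exact hg' t (hsub (Ioo_subset_Icc_self ht)) (hgpos t ⟨ht.1.le, ht.2⟩)
  have hle : g (sInf S) ≤ 0 := ht₁.2
  linarith [hmono (left_mem_Icc.2 ht₁.1.1) (right_mem_Icc.2 ht₁.1.1) ht₁.1.1]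

theorem lipschitzOnWith_cubic {α β Mα Mβ r : ℝ} (hα : |α| ≤ Mα) (hβ : |β| ≤ Mβ) :
    LipschitzOnWith (3 * Mα * r ^ 2 + 2 * Mβ * r).toNNReal (fun y => α * y ^ 3 + β * y ^ 2)
      (Icc 0 r) := by
  refine (convex_Icc 0 r).lipschitzOnWith_of_nnnorm_hasDerivWithin_le
    (f' := fun y => 3 * α * y ^ 2 + 2 * β * y)
    (fun y _ => (((hasDerivAt_pow 3 y).const_mul α).add
      ((hasDerivAt_pow 2 y).const_mul β)).hasDerivWithinAt.congr_deriv (by ring)) fun y hy => ?_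
  rw [← NNReal.coe_le_coe, coe_nnnorm, Real.norm_eq_abs]
  refine le_trans ?_ (Real.le_coe_toNNReal _)
  calc |3 * α * y ^ 2 + 2 * β * y| ≤ 3 * |α| * y ^ 2 + 2 * |β| * y := by
        refine (abs_add_le _ _).trans_eq ?_
        simp only [abs_mul, abs_of_nonneg hy.1, abs_pow]
        norm_num
    _ ≤ 3 * Mα * r ^ 2 + 2 * Mβ * r := by
        have := (abs_nonneg α).trans hα
        have := (abs_nonneg β).trans hβ
        gcongr <;> linarith [hy.1, hy.2]

theorem abs_cubic_le {α β Mα Mβ r y : ℝ} (hα : |α| ≤ Mα) (hβ : |β| ≤ Mβ) (hy : y ∈ Icc 0 r) :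
    |α * y ^ 3 + β * y ^ 2| ≤ Mα * r ^ 3 + Mβ * r ^ 2 := by
  calc |α * y ^ 3 + β * y ^ 2| ≤ |α| * y ^ 3 + |β| * y ^ 2 := by
        refine (abs_add_le _ _).trans_eq ?_
        simp only [abs_mul, abs_pow, abs_of_nonneg hy.1]
    _ ≤ Mα * r ^ 3 + Mβ * r ^ 2 := by
        have := (abs_nonneg α).trans hα
        have := (abs_nonneg β).trans hβ
        have := hy.1
        gcongr
        exacts [hy.2, hy.2]

/-- Truncating `x` to `[0, r]` makes the field globally bounded and Lipschitz, so that
Picard–Lindelöf gives solutions on all of `[0, 1]`. -/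
noncomputable def truncatedAbelField (A B : ℝ → ℝ) {r : ℝ} (hr : 0 ≤ r) (t x : ℝ) : ℝ :=
  A t * (projIcc 0 r hr x : ℝ) ^ 3 + B t * (projIcc 0 r hr x : ℝ) ^ 2

theorem exists_truncatedAbelField_flow {A B : ℝ → ℝ} {r : ℝ} (hA : ContinuousOn A (Icc 0 1))
    (hB : ContinuousOn B (Icc 0 1)) (hr : 0 < r) :
    ∃ Φ : ℝ → ℝ → ℝ, (∀ d ∈ Icc 0 r, Φ d 1 = d ∧ ∀ t ∈ Icc (0:ℝ) 1,
      HasDerivWithinAt (Φ d) (truncatedAbelField A B hr.le t (Φ d t)) (Icc 0 1) t) ∧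
      ∃ K : ℝ≥0, ∀ t ∈ Icc (0:ℝ) 1, LipschitzOnWith K (Φ · t) (Icc 0 r) := by
  obtain ⟨Mα, hMα⟩ := isCompact_Icc.exists_bound_of_continuousOn hA
  obtain ⟨Mβ, hMβ⟩ := isCompact_Icc.exists_bound_of_continuousOn hB
  set L := (Mα * r ^ 3 + Mβ * r ^ 2).toNNReal
  have hball : Metric.closedBall (r / 2) ((r / 2).toNNReal : ℝ) = Icc 0 r := by
    rw [Real.coe_toNNReal _ (by positivity), Real.closedBall_eq_Icc]; ring_nf
  have hproj := (LipschitzWith.subtype_val (Icc 0 r)).comp (LipschitzWith.projIcc hr.le)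
  have hpl : IsPicardLindelof (truncatedAbelField A B hr.le) (tmin := 0) (tmax := 1)
      ⟨1, right_mem_Icc.2 zero_le_one⟩ (r / 2) (L + (r / 2).toNNReal) (r / 2).toNNReal L
      (3 * Mα * r ^ 2 + 2 * Mβ * r).toNNReal :=
    { lipschitzOnWith := fun t ht => by
        have := (lipschitzOnWith_cubic (hMα t ht) (hMβ t ht)).comp
          (hproj.lipschitzOnWith (s := univ)) fun x _ => (projIcc 0 r hr.le x).2
        rw [mul_one, mul_one] at this
        exact this.mono (subset_univ _)
      continuousOn := fun x _ => (hA.mul continuousOn_const).add (hB.mul continuousOn_const)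
      norm_le := fun t ht x _ => (abs_cubic_le (hMα t ht) (hMβ t ht)
        (projIcc 0 r hr.le x).2).trans (Real.le_coe_toNNReal _)
      mul_max_le := by rw [NNReal.coe_add]; norm_num }
  obtain ⟨Φ, hΦ, K, hK⟩ := hpl.exists_forall_mem_closedBall_eq_hasDerivWithinAt_lipschitzOnWith
  rw [hball] at hΦ hK
  exact ⟨Φ, hΦ, K, hK⟩

section Existence

variable {A B : ℝ → ℝ} {r : ℝ}

theorem mem_Icc_of_hasDerivWithinAt_truncatedAbelField (hr : 0 ≤ r)
    (hh : ∀ t ∈ Icc (0:ℝ) 1, 0 ≤ r * A t + B t) {f : ℝ → ℝ}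
    (hf : ∀ t ∈ Icc (0:ℝ) 1,
      HasDerivWithinAt f (truncatedAbelField A B hr t (f t)) (Icc 0 1) t)
    (h1 : f 1 ∈ Icc 0 r) : ∀ t ∈ Icc (0:ℝ) 1, f t ∈ Icc 0 r := by
  have hle := nonpos_of_hasDerivWithinAt_nonneg_of_pos (fun t ht => (hf t ht).sub_const r)
    (fun t ht hpos => by
      simp only [truncatedAbelField, projIcc_of_right_le hr (sub_pos.1 hpos).le]
      nlinarith [mul_nonneg (sq_nonneg r) (hh t ht)])
    (sub_nonpos.2 h1.2)
  have hge := nonpos_of_hasDerivWithinAt_nonneg_of_pos (fun t ht => (hf t ht).neg)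
    (fun t ht hpos => by
      simp [truncatedAbelField, projIcc_of_le_left hr (neg_pos.1 hpos).le])
    (neg_nonpos.2 h1.1)
  exact fun t ht => ⟨neg_nonpos.1 (hge t ht), sub_nonpos.1 (hle t ht)⟩

theorem exists_abelSolution_flow (hA : ContinuousOn A (Icc 0 1)) (hB : ContinuousOn B (Icc 0 1))
    (hr : 0 < r) (hh : ∀ t ∈ Icc (0:ℝ) 1, 0 ≤ r * A t + B t) :
    ∃ Φ : ℝ → ℝ → ℝ, (∀ d ∈ Icc 0 r, Φ d 1 = d ∧ IsAbelSolution A B (Φ d) ∧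
      ∀ t ∈ Icc (0:ℝ) 1, Φ d t ∈ Icc 0 r) ∧
      ∃ K : ℝ≥0, ∀ t ∈ Icc (0:ℝ) 1, LipschitzOnWith K (Φ · t) (Icc 0 r) := by
  obtain ⟨Φ, hΦ, hK⟩ := exists_truncatedAbelField_flow hA hB hr
  refine ⟨Φ, fun d hd => ?_, hK⟩
  obtain ⟨h1, hderiv⟩ := hΦ d hd
  have hmem := mem_Icc_of_hasDerivWithinAt_truncatedAbelField hr.le hh hderiv (h1.symm ▸ hd)
  refine ⟨h1, fun t ht => ?_, hmem⟩
  simpa [truncatedAbelField, projIcc_of_mem hr.le (hmem t ht)] using hderiv t ht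

theorem exists_le_flow_zero (hA : ContinuousOn A (Icc 0 1)) (hB : ContinuousOn B (Icc 0 1))
    (hr : 0 < r) {Φ : ℝ → ℝ → ℝ} (hΦ : ∀ d ∈ Icc 0 r, Φ d 1 = d ∧ IsAbelSolution A B (Φ d))
    {K : ℝ≥0} (hK : ∀ t ∈ Icc (0:ℝ) 1, LipschitzOnWith K (Φ · t) (Icc 0 r))
    (hB_int : ∫ t in (0:ℝ)..1, B t < 0) : ∃ d ∈ Ioc 0 r, d ≤ Φ d 0 := by
  have h0 : (0:ℝ) ∈ Icc (0:ℝ) 1 := left_mem_Icc.2 zero_le_one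
  have h1 : (1:ℝ) ∈ Icc (0:ℝ) 1 := right_mem_Icc.2 zero_le_one
  obtain ⟨M, hM⟩ := isCompact_Icc.exists_bound_of_continuousOn hA
  have hM0 : 0 ≤ M := (norm_nonneg _).trans (hM 0 h0)
  set d := min r (-(∫ t in (0:ℝ)..1, B t) / (M * K + 1))
  have hd : d ∈ Ioc 0 r := ⟨lt_min hr (div_pos (neg_pos.2 hB_int) (by positivity)), min_le_left _ _⟩
  obtain ⟨hd1, hγ⟩ := hΦ d (Ioc_subset_Icc_self hd)
  have hγpos : ∀ t ∈ Icc (0:ℝ) 1, 0 < Φ d t := fun t ht =>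
    hγ.pos_of_pos hA hB h1 ht (hd1.symm ▸ hd.1)
  -- `Φ 0 ≡ 0`, so the Lipschitz bound makes `Φ d` of size `O(d)`
  have hγle : ∀ t ∈ Icc (0:ℝ) 1, Φ d t ≤ K * d := fun t ht => by
    obtain ⟨h01, hγ0⟩ := hΦ 0 (left_mem_Icc.2 hr.le)
    have hzero : Φ 0 t = 0 := hγ0.eq_zero_of_eq_zero hA hB h1 ht h01
    have := (hK t ht).dist_le_mul d (Ioc_subset_Icc_self hd) 0 (left_mem_Icc.2 hr.le)
    rwa [hzero, Real.dist_eq, Real.dist_eq, sub_zero, sub_zero, abs_of_pos (hγpos t ht),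
      abs_of_pos hd.1] at this
  have hAγi : IntervalIntegrable (fun t => A t * Φ d t) MeasureTheory.volume 0 1 :=
    (hA.mul hγ.continuousOn).intervalIntegrable_of_Icc zero_le_one
  have hAγ : ∫ t in (0:ℝ)..1, A t * Φ d t ≤ ∫ t in (0:ℝ)..1, M * (K * d) := by
    refine integral_mono_on zero_le_one hAγi intervalIntegrable_const fun t ht => ?_
    calc A t * Φ d t ≤ |A t| * Φ d t := mul_le_mul_of_nonneg_right (le_abs_self _) (hγpos t ht).le
      _ ≤ M * (K * d) := mul_le_mul (hM t ht) (hγle t ht) (hγpos t ht).le hM0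
  have hid := hγ.integral_eq_inv_sub_inv hA hB fun t ht => (hγpos t ht).ne'
  rw [integral_add hAγi (hB.intervalIntegrable_of_Icc zero_le_one), hd1] at hid
  have hdB : M * (K * d) + d ≤ -∫ t in (0:ℝ)..1, B t := by
    have := (le_div_iff₀ (by positivity)).1 (min_le_right _ _ : d ≤ _)
    linarith
  simp only [intervalIntegral.integral_const, sub_zero, one_smul] at hAγ
  refine ⟨d, hd, (inv_le_inv₀ (hγpos 0 h0) hd.1).1 ?_⟩
  linarith [hd.1]

theorem exists_isPeriodicOrbit_pos_lt (hA : ContinuousOn A (Icc 0 1))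
    (hB : ContinuousOn B (Icc 0 1)) (hr : 0 < r) (hh : ∀ t ∈ Icc (0:ℝ) 1, 0 ≤ r * A t + B t)
    (hh_ne : ∃ t ∈ Icc (0:ℝ) 1, r * A t + B t ≠ 0) (hB_int : ∫ t in (0:ℝ)..1, B t < 0) :
    ∃ γ : ℝ → ℝ, IsPeriodicOrbit A B γ ∧ ∀ t ∈ Icc (0:ℝ) 1, 0 < γ t ∧ γ t < r := by
  have h0 : (0:ℝ) ∈ Icc (0:ℝ) 1 := left_mem_Icc.2 zero_le_one
  have h1 : (1:ℝ) ∈ Icc (0:ℝ) 1 := right_mem_Icc.2 zero_le_one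
  obtain ⟨Φ, hΦ, K, hK⟩ := exists_abelSolution_flow hA hB hr hh
  obtain ⟨d₀, hd₀, hd₀Φ⟩ :=
    exists_le_flow_zero hA hB hr (fun d hd => ⟨(hΦ d hd).1, (hΦ d hd).2.1⟩) hK hB_int
  have hsub : Icc d₀ r ⊆ Icc 0 r := Icc_subset_Icc_left hd₀.1.le
  have hΦr : Φ r 0 ≤ r := ((hΦ r (right_mem_Icc.2 hr.le)).2.2 0 h0).2
  obtain ⟨c, hc, hfix⟩ := intermediate_value_Icc' hd₀.2
    (((hK 0 h0).continuousOn.mono hsub).sub continuousOn_id)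
    ⟨sub_nonpos.2 hΦr, sub_nonneg.2 hd₀Φ⟩
  obtain ⟨hc1, hγ, -⟩ := hΦ c (hsub hc)
  have hc0 : Φ c 0 = c := sub_eq_zero.1 hfix
  have hper : IsPeriodicOrbit A B (Φ c) := ⟨hγ, hc0.trans hc1.symm⟩
  refine ⟨Φ c, hper, fun t ht => ⟨hγ.pos_of_pos hA hB h1 ht (hc1.symm ▸ hd₀.1.trans_le hc.1), ?_⟩⟩
  refine (hper.lt_or_gt hA hr.ne' hh hh_ne).resolve_right (fun hgt => ?_) t ht
  linarith [hgt 0 h0, hc.2]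

end Existence

theorem abel_location_of_nonzero_periodic_orbit
    (A B : ℝ → ℝ)
    (hA : ContinuousOn A (Set.Icc 0 1)) (hB : ContinuousOn B (Set.Icc 0 1))
    (a b : ℝ) (hb : b ≠ 0) (hab : a / b > 0)
    (h_nonneg : ∀ t ∈ Set.Icc (0:ℝ) 1, 0 ≤ (a * A t + b * B t) / b)
    (h_not_ident_zero : ¬ ∀ t ∈ Set.Icc (0:ℝ) 1, (a * A t + b * B t) / b = 0) :
    ((∫ t in (0:ℝ)..1, A t) < 0 →
      ∀ γ : ℝ → ℝ, IsPeriodicOrbit A B γ → γ 0 ≠ 0 →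
        ∀ t ∈ Set.Icc (0:ℝ) 1, γ t > a / b) ∧
    ((0 < ∫ t in (0:ℝ)..1, A t) → (0 < ∫ t in (0:ℝ)..1, B t) →
      ∀ γ : ℝ → ℝ, IsPeriodicOrbit A B γ → γ 0 ≠ 0 →
        ∀ t ∈ Set.Icc (0:ℝ) 1, γ t < 0) ∧
    ((0 < ∫ t in (0:ℝ)..1, A t) → ((∫ t in (0:ℝ)..1, B t) < 0) →
      ∃ γ : ℝ → ℝ, IsPeriodicOrbit A B γ ∧
        ∀ t ∈ Set.Icc (0:ℝ) 1, 0 < γ t ∧ γ t < a / b) := by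
  have hh_eq : ∀ t, (a * A t + b * B t) / b = a / b * A t + B t := fun t => by field_simp
  simp only [hh_eq] at h_nonneg h_not_ident_zero
  push Not at h_not_ident_zero
  exact ⟨fun hA_int γ hγ hγ0 =>
      hγ.gt_of_integral_neg hA hB hab h_nonneg h_not_ident_zero hγ0 hA_int,
    fun hA_int hB_int γ hγ hγ0 =>
      hγ.neg_of_integral_pos hA hB hab h_nonneg h_not_ident_zero hγ0 hA_int hB_int,
    fun _ hB_int => exists_isPeriodicOrbit_pos_lt hA hB hab h_nonneg h_not_ident_zero hB_int⟩
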